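/- arXiv:2503.06855 — 4 statements merged into one kernel-verified Lean document; each statement's English description precedes it below -/
import Mathlib

section
/- Suppose E is a d-dimensional vector bundle with a volume form over a topological space X, and μ is a probability measure on volume-preserving bundle automorphisms of E. Then μ is coexpanding on average (the induced inverse-transpose cocycle on E* is expanding on average) if and only if μ is expanding on average on (d−1)-planes, i.e., there exist N, λ > 0 such that for every (d−1)-dimensional subspace V of a fiber of E, ∫ ln ‖F^N_ω |_{vol_V}‖ dμ^N(ω) ≥ λ. -/
open MeasureTheory

/-- Base point after `n` steps of the random composition. -/
def seqPt {G X : Type*} (t : G → X → X) : ∀ n : ℕ, (Fin n → G) → X → X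
  | 0, _, x => x
  | n + 1, ω, x => t (ω (Fin.last n)) (seqPt t n (fun j => ω j.castSucc) x)

/-- The composed linear cocycle `F^n_ω` over the base orbit. -/
def seqL {G X V : Type*} [TopologicalSpace V] [AddCommGroup V] [Module ℝ V]
    (t : G → X → X) (A : G → X → (V ≃L[ℝ] V)) : ∀ n : ℕ, (Fin n → G) → X → (V ≃L[ℝ] V)
  | 0, _, _ => ContinuousLinearEquiv.refl ℝ V
  | n + 1, ω, x =>
      (seqL t A n (fun j => ω j.castSucc) x).trans
        (A (ω (Fin.last n)) (seqPt t n (fun j => ω j.castSucc) x))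

/-- The factor by which a linear map `L` scales the volume of a subspace `W`, namely
`√ det ((L|_W)* (L|_W))`, i.e. `‖L|_{vol_W}‖`. -/
noncomputable def volScale {d : ℕ}
    (L : EuclideanSpace ℝ (Fin d) →L[ℝ] EuclideanSpace ℝ (Fin d))
    (W : Submodule ℝ (EuclideanSpace ℝ (Fin d))) : ℝ :=
  Real.sqrt (LinearMap.det
    (((ContinuousLinearMap.adjoint (L.comp W.subtypeL)).comp (L.comp W.subtypeL)).toLinearMap))

open Matrix in
lemma det_sub_eq (n : ℕ) (M : Matrix (Fin (n+1)) (Fin (n+1)) ℝ) (hM : M.det ≠ 0) :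
    (M.submatrix Fin.castSucc Fin.castSucc).det
      = M.det * (M⁻¹ (Fin.last n) (Fin.last n)) := by
  have h := Matrix.adjugate_fin_succ_eq_det_submatrix M (Fin.last n) (Fin.last n)
  rw [Fin.succAbove_last,
    show (((Fin.last n : Fin (n+1)) : ℕ) + ((Fin.last n : Fin (n+1)) : ℕ)) = n + n from rfl,
    Even.neg_one_pow ⟨n, rfl⟩, one_mul] at h
  rw [Matrix.inv_def, Matrix.smul_apply, smul_eq_mul, Ring.inverse_eq_inv', ← mul_assoc,
    mul_inv_cancel₀ hM, one_mul, h]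

open Matrix in
open scoped RealInnerProductSpace in
lemma key {n : ℕ}
    (L : EuclideanSpace ℝ (Fin (n+1)) ≃L[ℝ] EuclideanSpace ℝ (Fin (n+1)))
    (hL : |LinearMap.det
      (((L : EuclideanSpace ℝ (Fin (n+1)) →L[ℝ] EuclideanSpace ℝ (Fin (n+1)))) :
        EuclideanSpace ℝ (Fin (n+1)) →ₗ[ℝ] EuclideanSpace ℝ (Fin (n+1)))| = 1)
    (v : EuclideanSpace ℝ (Fin (n+1))) (hv : ‖v‖ = 1) :
    volScale (L : EuclideanSpace ℝ (Fin (n+1)) →L[ℝ] EuclideanSpace ℝ (Fin (n+1))) ((ℝ ∙ v)ᗮ)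
      = ‖ContinuousLinearMap.adjoint
          ((L.symm : EuclideanSpace ℝ (Fin (n+1)) →L[ℝ] EuclideanSpace ℝ (Fin (n+1)))) v‖ := by
  have hvne : v ≠ 0 := fun h => by simp [h] at hv
  obtain ⟨b, hb⟩ := Orthonormal.exists_orthonormalBasis_extension_of_card_eq
    (𝕜 := ℝ) (by simp) (v := fun _ : Fin (n+1) => v) (s := {Fin.last n})
    ⟨fun i => by simpa using hv, fun i j hij => absurd (Subsingleton.elim i j) hij⟩
  have hbl : b (Fin.last n) = v := hb _ rfl
  have hmem : ∀ i : Fin n, b i.castSucc ∈ (ℝ ∙ v)ᗮ := by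
    intro i
    rw [Submodule.mem_orthogonal_singleton_iff_inner_right, ← hbl]
    exact b.orthonormal.2 (Fin.ne_of_gt (Fin.castSucc_lt_last i))
  set W : Submodule ℝ (EuclideanSpace ℝ (Fin (n+1))) := (ℝ ∙ v)ᗮ with hW
  have hfr : Module.finrank ℝ W = n := by
    have h1 : Module.finrank ℝ (ℝ ∙ v) = 1 := finrank_span_singleton hvne
    have h2 := Submodule.finrank_add_finrank_orthogonal (K := (ℝ ∙ v))
    rw [h1, finrank_euclideanSpace_fin, ← hW] at h2
    omega
  set f : Fin n → W := fun i => ⟨b i.castSucc, hmem i⟩ with hf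
  have hon : Orthonormal ℝ f := by
    constructor
    · intro i
      have := b.orthonormal.1 i.castSucc
      simpa [f, Submodule.norm_coe] using this
    · intro i j hij
      have : ⟪b i.castSucc, b j.castSucc⟫ = 0 :=
        b.orthonormal.2 (by simpa using hij)
      simpa [f, Submodule.coe_inner] using this
  have hsp : ⊤ ≤ Submodule.span ℝ (Set.range f) := by
    rw [hon.linearIndependent.span_eq_top_of_card_eq_finrank' (by simp [hfr])]
  set c : OrthonormalBasis (Fin n) ℝ W := OrthonormalBasis.mk hon hsp with hc
  have hcf : ∀ i : Fin n, (c i : EuclideanSpace ℝ (Fin (n+1))) = b i.castSucc := by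
    intro i
    rw [hc, OrthonormalBasis.coe_mk]
  -- matrices
  set Lm := LinearMap.toMatrix b.toBasis b.toBasis
      (((L : EuclideanSpace ℝ (Fin (n+1)) →L[ℝ] EuclideanSpace ℝ (Fin (n+1)))) :
        EuclideanSpace ℝ (Fin (n+1)) →ₗ[ℝ] EuclideanSpace ℝ (Fin (n+1))) with hLm
  have hLmdet : Lm.det = LinearMap.det
      (((L : EuclideanSpace ℝ (Fin (n+1)) →L[ℝ] EuclideanSpace ℝ (Fin (n+1)))) :
        EuclideanSpace ℝ (Fin (n+1)) →ₗ[ℝ] EuclideanSpace ℝ (Fin (n+1))) :=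
    LinearMap.det_toMatrix _ _
  have hdetne : Lm.det ≠ 0 := by
    rw [hLmdet]; intro h; rw [h] at hL; simp at hL
  have entry : ∀ (g : EuclideanSpace ℝ (Fin (n+1)) →ₗ[ℝ] EuclideanSpace ℝ (Fin (n+1))) i j,
      LinearMap.toMatrix b.toBasis b.toBasis g i j = ⟪b i, g (b j)⟫ := by
    intro g i j
    rw [LinearMap.toMatrix_apply, OrthonormalBasis.coe_toBasis_repr_apply,
      OrthonormalBasis.repr_apply_apply, b.coe_toBasis]
  set M := Lmᵀ * Lm with hM
  have hMentry : ∀ i j, M i j = ⟪L (b i), L (b j)⟫ := by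
    intro i j
    rw [hM, Matrix.mul_apply]
    have h' : ∀ k, Lmᵀ i k * Lm k j = ⟪L (b i), b k⟫ * ⟪b k, L (b j)⟫ := by
      intro k
      rw [Matrix.transpose_apply, hLm, entry, entry, real_inner_comm]
      rfl
    rw [Finset.sum_congr rfl fun k _ => h' k, OrthonormalBasis.sum_inner_mul_inner]
  set Km := LinearMap.toMatrix b.toBasis b.toBasis
      (((L.symm : EuclideanSpace ℝ (Fin (n+1)) →L[ℝ] EuclideanSpace ℝ (Fin (n+1)))) :
        EuclideanSpace ℝ (Fin (n+1)) →ₗ[ℝ] EuclideanSpace ℝ (Fin (n+1))) with hKm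
  have hKminv : Lm⁻¹ = Km := by
    apply Matrix.inv_eq_right_inv
    rw [hLm, hKm, ← LinearMap.toMatrix_comp b.toBasis b.toBasis b.toBasis,
      ← LinearMap.toMatrix_id (R := ℝ) b.toBasis]
    congr 1
    ext x
    simp
  have hMdet : M.det = 1 := by
    rw [hM, Matrix.det_mul, Matrix.det_transpose, hLmdet, ← sq, ← sq_abs, hL, one_pow]
  have hMinv : M⁻¹ (Fin.last n) (Fin.last n)
      = ∑ k, Km (Fin.last n) k * Km (Fin.last n) k := by
    rw [hM, Matrix.mul_inv_rev, ← Matrix.transpose_nonsing_inv, hKminv, Matrix.mul_apply]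
    simp [Matrix.transpose_apply]
  -- the co-vector
  set u := ContinuousLinearMap.adjoint
      ((L.symm : EuclideanSpace ℝ (Fin (n+1)) →L[ℝ] EuclideanSpace ℝ (Fin (n+1)))) v with hu
  have hcoords : ∀ k, ⟪b k, u⟫ = Km (Fin.last n) k := by
    intro k
    rw [hu, ContinuousLinearMap.adjoint_inner_right, real_inner_comm, ← hbl, hKm, entry]
    rfl
  have hnorm : ‖u‖ ^ 2 = M⁻¹ (Fin.last n) (Fin.last n) := by
    rw [← real_inner_self_eq_norm_sq, ← OrthonormalBasis.sum_inner_mul_inner b u u, hMinv]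
    refine Finset.sum_congr rfl fun k _ => ?_
    simp only [real_inner_comm u (b k)]
    have hk : ⟪u, b k⟫ = Km (Fin.last n) k := by rw [real_inner_comm]; exact hcoords k
    rw [hk]
  -- the (d-1)-volume distortion
  set T := (L : EuclideanSpace ℝ (Fin (n+1)) →L[ℝ] EuclideanSpace ℝ (Fin (n+1))).comp
      W.subtypeL with hT
  have hTc : ∀ i : Fin n, T (c i) = L (b i.castSucc) := by
    intro i
    rw [hT]
    simp only [ContinuousLinearMap.comp_apply, Submodule.subtypeL_apply]
    rw [hcf]
    rfl
  have hTT : LinearMap.det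
        (((ContinuousLinearMap.adjoint T).comp T).toLinearMap)
      = (M.submatrix Fin.castSucc Fin.castSucc).det := by
    rw [← LinearMap.det_toMatrix c.toBasis]
    congr 1
    ext i j
    rw [LinearMap.toMatrix_apply, OrthonormalBasis.coe_toBasis_repr_apply,
      OrthonormalBasis.repr_apply_apply, c.coe_toBasis]
    show ⟪c i, (ContinuousLinearMap.adjoint T) (T (c j))⟫ = _
    rw [ContinuousLinearMap.adjoint_inner_right, hTc, hTc, Matrix.submatrix_apply, hMentry]
  have hMdetne : M.det ≠ 0 := by rw [hMdet]; norm_num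
  rw [volScale]
  rw [show ((L : EuclideanSpace ℝ (Fin (n+1)) →L[ℝ] EuclideanSpace ℝ (Fin (n+1))).comp
      W.subtypeL) = T from rfl, hTT, det_sub_eq n M hMdetne, hMdet, one_mul, ← hnorm,
    Real.sqrt_sq (norm_nonneg u)]

lemma detseq {d : ℕ} {G X : Type*} (t : G → X → X)
    (A : G → X → (EuclideanSpace ℝ (Fin d) ≃L[ℝ] EuclideanSpace ℝ (Fin d)))
    (hvol : ∀ g x, |LinearMap.det
      (((A g x : EuclideanSpace ℝ (Fin d) →L[ℝ] EuclideanSpace ℝ (Fin d))) :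
        EuclideanSpace ℝ (Fin d) →ₗ[ℝ] EuclideanSpace ℝ (Fin d))| = 1) :
    ∀ (n : ℕ) (ω : Fin n → G) (x : X),
      |LinearMap.det
        (((seqL t A n ω x : EuclideanSpace ℝ (Fin d) →L[ℝ] EuclideanSpace ℝ (Fin d))) :
          EuclideanSpace ℝ (Fin d) →ₗ[ℝ] EuclideanSpace ℝ (Fin d))| = 1
  | 0, ω, x => by
      simp [seqL]
  | n+1, ω, x => by
      rw [seqL]
      have hco : ((((seqL t A n (fun j => ω j.castSucc) x).trans
            (A (ω (Fin.last n)) (seqPt t n (fun j => ω j.castSucc) x)) :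
              EuclideanSpace ℝ (Fin d) →L[ℝ] EuclideanSpace ℝ (Fin d))) :
            EuclideanSpace ℝ (Fin d) →ₗ[ℝ] EuclideanSpace ℝ (Fin d))
          = ((((A (ω (Fin.last n)) (seqPt t n (fun j => ω j.castSucc) x)) :
              EuclideanSpace ℝ (Fin d) →L[ℝ] EuclideanSpace ℝ (Fin d))) :
            EuclideanSpace ℝ (Fin d) →ₗ[ℝ] EuclideanSpace ℝ (Fin d)).comp
            ((((seqL t A n (fun j => ω j.castSucc) x) :
              EuclideanSpace ℝ (Fin d) →L[ℝ] EuclideanSpace ℝ (Fin d))) :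
            EuclideanSpace ℝ (Fin d) →ₗ[ℝ] EuclideanSpace ℝ (Fin d)) := by
        ext y; rfl
      rw [hco, LinearMap.det_comp, abs_mul, hvol, detseq t A hvol n _ x, mul_one]

lemma exists_unit_normal {n : ℕ} (W : Submodule ℝ (EuclideanSpace ℝ (Fin (n+1))))
    (hWr : Module.finrank ℝ W = n) :
    ∃ v : EuclideanSpace ℝ (Fin (n+1)), ‖v‖ = 1 ∧ W = (ℝ ∙ v)ᗮ := by
  have h2 := Submodule.finrank_add_finrank_orthogonal (K := W)
  rw [hWr, finrank_euclideanSpace_fin] at h2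
  have h1 : Module.finrank ℝ Wᗮ = 1 := by omega
  obtain ⟨x, hx0, -⟩ := finrank_eq_one_iff'.mp h1
  have hx0' : (x : EuclideanSpace ℝ (Fin (n+1))) ≠ 0 := by
    simpa [Submodule.coe_eq_zero] using hx0
  have hle : (ℝ ∙ (x : EuclideanSpace ℝ (Fin (n+1)))) ≤ Wᗮ :=
    (Submodule.span_singleton_le_iff_mem _ _).mpr x.2
  have hWo : Wᗮ = ℝ ∙ (x : EuclideanSpace ℝ (Fin (n+1))) :=
    (Submodule.eq_of_le_of_finrank_eq hle (by rw [h1, finrank_span_singleton hx0'])).symm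
  set v : EuclideanSpace ℝ (Fin (n+1)) := ‖(x : EuclideanSpace ℝ (Fin (n+1)))‖⁻¹ • x with hv
  have hnv : ‖v‖ = 1 := by
    rw [hv, norm_smul, norm_inv, norm_norm, inv_mul_cancel₀ (norm_ne_zero_iff.mpr hx0')]
  refine ⟨v, hnv, ?_⟩
  have hsp : (ℝ ∙ v) = ℝ ∙ (x : EuclideanSpace ℝ (Fin (n+1))) := by
    rw [hv]
    exact Submodule.span_singleton_smul_eq
      (isUnit_iff_ne_zero.mpr (inv_ne_zero (norm_ne_zero_iff.mpr hx0'))) _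
  rw [hsp, ← hWo, Submodule.orthogonal_orthogonal]

lemma finrank_unit_normal {n : ℕ} (v : EuclideanSpace ℝ (Fin (n+1))) (hv : ‖v‖ = 1) :
    Module.finrank ℝ ((ℝ ∙ v)ᗮ) = n := by
  have hvne : v ≠ 0 := fun h => by simp [h] at hv
  have h1 : Module.finrank ℝ (ℝ ∙ v) = 1 := finrank_span_singleton hvne
  have h2 := Submodule.finrank_add_finrank_orthogonal (K := (ℝ ∙ v))
  rw [h1, finrank_euclideanSpace_fin] at h2
  omega

/-- Let `E` be a `d`-dimensional Riemannian vector bundle with a compatible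
volume form and `μ` a probability measure on volume-preserving bundle automorphisms (modelled
by a cocycle `A` of fiberwise isomorphisms with `|det| = 1` over a base action `t`). Then `μ`
is coexpanding on average (the inverse–adjoint cocycle on `E*` is expanding on average) iff
`μ` is expanding on average on `(d−1)`-planes. -/
theorem stmt5 (d : ℕ) (hd : 1 ≤ d) {G X : Type*} [MeasurableSpace G]
    (μ : Measure G) [IsProbabilityMeasure μ]
    (t : G → X → X)
    (A : G → X → (EuclideanSpace ℝ (Fin d) ≃L[ℝ] EuclideanSpace ℝ (Fin d)))
    (hvol : ∀ g x, |LinearMap.det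
      (((A g x : EuclideanSpace ℝ (Fin d) →L[ℝ] EuclideanSpace ℝ (Fin d))) :
        EuclideanSpace ℝ (Fin d) →ₗ[ℝ] EuclideanSpace ℝ (Fin d))| = 1) :
    (∃ (N : ℕ) (lam : ℝ), 0 < N ∧ 0 < lam ∧
        ∀ (x : X) (v : EuclideanSpace ℝ (Fin d)), ‖v‖ = 1 →
          lam ≤ ∫ ω, Real.log
              ‖ContinuousLinearMap.adjoint
                (((seqL t A N ω x).symm : EuclideanSpace ℝ (Fin d) →L[ℝ]
                    EuclideanSpace ℝ (Fin d))) v‖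
            ∂(Measure.pi fun _ : Fin N => μ)) ↔
    (∃ (N : ℕ) (lam : ℝ), 0 < N ∧ 0 < lam ∧
        ∀ (x : X) (W : Submodule ℝ (EuclideanSpace ℝ (Fin d))),
          Module.finrank ℝ W = d - 1 →
          lam ≤ ∫ ω, Real.log (volScale
              ((seqL t A N ω x : EuclideanSpace ℝ (Fin d) →L[ℝ] EuclideanSpace ℝ (Fin d))) W)
            ∂(Measure.pi fun _ : Fin N => μ)) := by
  obtain ⟨n, rfl⟩ : ∃ n, d = n + 1 := ⟨d - 1, by omega⟩
  constructor
  · rintro ⟨N, lam, hN, hlam, H⟩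
    refine ⟨N, lam, hN, hlam, fun x W hWr => ?_⟩
    obtain ⟨v, hv, rfl⟩ := exists_unit_normal W (by simpa using hWr)
    refine le_trans (H x v hv) (le_of_eq ?_)
    refine integral_congr_ae (Filter.Eventually.of_forall fun ω => ?_)
    exact congrArg Real.log (key (seqL t A N ω x) (detseq t A hvol N ω x) v hv).symm
  · rintro ⟨N, lam, hN, hlam, H⟩
    refine ⟨N, lam, hN, hlam, fun x v hv => ?_⟩
    refine le_trans (H x ((ℝ ∙ v)ᗮ) (by simpa using finrank_unit_normal v hv)) (le_of_eq ?_)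
    refine integral_congr_ae (Filter.Eventually.of_forall fun ω => ?_)
    exact congrArg Real.log (key (seqL t A N ω x) (detseq t A hvol N ω x) v hv)
end

section
/- In dimension 2: if E is a two-dimensional vector bundle over a manifold M and μ is a compactly supported measure on bundle automorphisms of E whose induced action on Λ²E preserves a non-vanishing volume form, then μ is expanding on average if and only if μ is coexpanding on average (i.e., the induced measure on automorphisms of E* is expanding on average). -/
/-! In an oriented Euclidean plane with quarter-turn rotation `J`, every invertible `B` satisfies
`(B⁻¹)* = (det B)⁻¹ • J B J⁻¹`, since `⟪J x, y⟫` is the area form and `B` scales areas by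
`det B`. When `|det B| = 1` this gives `‖(B⁻¹)* v‖ = ‖B (J⁻¹ v)‖`; as `J` is an isometry,
expansion on average passes from the cocycle to its inverse adjoint and back. -/

open MeasureTheory

open Module

namespace Orientation

variable {E : Type*} [NormedAddCommGroup E] [InnerProductSpace ℝ E]

theorem volumeForm_comp_linearMap {n : ℕ} [Fact (finrank ℝ E = n)]
    (o : Orientation ℝ E (Fin n)) (f : E →ₗ[ℝ] E) (v : Fin n → E) :
    o.volumeForm (f ∘ v) = LinearMap.det f * o.volumeForm v := by
  rcases n.eq_zero_or_pos with rfl | hn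
  · rw [LinearMap.det_eq_one_of_finrank_eq_zero Fact.out, one_mul, Subsingleton.elim (f ∘ v) v]
  · rw [o.volumeForm_robust _ (o.finOrthonormalBasis_orientation hn Fact.out)]
    exact Basis.det_comp _ f v

variable [Fact (finrank ℝ E = 2)] (o : Orientation ℝ E (Fin 2))

attribute [local instance] FiniteDimensional.of_fact_finrank_eq_two

theorem areaForm_map_linearMap (f : E →ₗ[ℝ] E) (x y : E) :
    o.areaForm (f x) (f y) = LinearMap.det f * o.areaForm x y := by
  simp only [areaForm_to_volumeForm, ← o.volumeForm_comp_linearMap f]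
  congr 1
  ext i; fin_cases i <;> rfl

theorem adjoint_symm_eq_smul_rightAngleRotation (B : E ≃L[ℝ] E) (v : E) :
    ContinuousLinearMap.adjoint (B.symm : E →L[ℝ] E) v =
      (LinearMap.det ((B : E →L[ℝ] E) : E →ₗ[ℝ] E))⁻¹ •
        o.rightAngleRotation (B (o.rightAngleRotation.symm v)) := by
  set d := LinearMap.det ((B : E →L[ℝ] E) : E →ₗ[ℝ] E)
  have hd : d ≠ 0 := (LinearEquiv.isUnit_det' B.toLinearEquiv).ne_zero
  refine ext_inner_right ℝ fun w => ?_
  have hB : o.areaForm (B (o.rightAngleRotation.symm v)) (B (B.symm w)) =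
      d * o.areaForm (o.rightAngleRotation.symm v) (B.symm w) :=
    o.areaForm_map_linearMap (B : E →L[ℝ] E) _ _
  rw [ContinuousLinearMap.adjoint_inner_left, real_inner_smul_left, inner_rightAngleRotation_left,
    ← B.apply_symm_apply w, hB, inv_mul_cancel_left₀ hd, ← inner_rightAngleRotation_left,
    LinearIsometryEquiv.apply_symm_apply, B.apply_symm_apply, ContinuousLinearEquiv.coe_coe]

theorem norm_adjoint_symm_apply (B : E ≃L[ℝ] E) (v : E) :
    ‖ContinuousLinearMap.adjoint (B.symm : E →L[ℝ] E) v‖ =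
      |LinearMap.det ((B : E →L[ℝ] E) : E →ₗ[ℝ] E)|⁻¹ * ‖B (o.rightAngleRotation.symm v)‖ := by
  rw [o.adjoint_symm_eq_smul_rightAngleRotation, norm_smul, LinearIsometryEquiv.norm_map,
    Real.norm_eq_abs, abs_inv]

end Orientation

def IsExpandingOnAverage {G X V : Type*} [MeasurableSpace G] [NormedAddCommGroup V]
    (μ : Measure G) (F : ∀ N : ℕ, (Fin N → G) → X → V → V) : Prop :=
  ∃ (N : ℕ) (lam : ℝ), 0 < N ∧ 0 < lam ∧
    ∀ (x : X) (v : V), ‖v‖ = 1 →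
      lam ≤ ∫ ω, Real.log ‖F N ω x v‖ ∂(Measure.pi fun _ : Fin N => μ)

section IsExpandingOnAverage

variable {G X V : Type*} [MeasurableSpace G] [NormedAddCommGroup V] [NormedSpace ℝ V]
  {μ : Measure G} {F F' : ∀ N : ℕ, (Fin N → G) → X → V → V}

theorem IsExpandingOnAverage.of_norm_eq (J : V ≃ₗᵢ[ℝ] V)
    (h : ∀ N ω x v, ‖F' N ω x v‖ = ‖F N ω x (J v)‖) (hF : IsExpandingOnAverage μ F) :
    IsExpandingOnAverage μ F' := by
  obtain ⟨N, lam, hN, hlam, hF⟩ := hF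
  refine ⟨N, lam, hN, hlam, fun x v hv => ?_⟩
  simp_rw [h]
  exact hF x (J v) (by rwa [J.norm_map])

theorem isExpandingOnAverage_congr_of_norm_eq (J : V ≃ₗᵢ[ℝ] V)
    (h : ∀ N ω x v, ‖F' N ω x v‖ = ‖F N ω x (J v)‖) :
    IsExpandingOnAverage μ F ↔ IsExpandingOnAverage μ F' :=
  ⟨.of_norm_eq J h, .of_norm_eq J.symm fun N ω x v => by rw [h, J.apply_symm_apply]⟩

end IsExpandingOnAverage

theorem abs_det_seqL_eq_one {G X V : Type*} [TopologicalSpace V] [AddCommGroup V] [Module ℝ V]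
    (t : G → X → X) (A : G → X → (V ≃L[ℝ] V))
    (hA : ∀ g x, |LinearMap.det ((A g x : V →L[ℝ] V) : V →ₗ[ℝ] V)| = 1) :
    ∀ (n : ℕ) (ω : Fin n → G) (x : X),
      |LinearMap.det ((seqL t A n ω x : V →L[ℝ] V) : V →ₗ[ℝ] V)| = 1
  | 0, _, _ => by simp [seqL]
  | n + 1, ω, x => by
    change |LinearMap.det (((A _ _ : V →L[ℝ] V) : V →ₗ[ℝ] V) ∘ₗ
      ((seqL t A n (fun j => ω j.castSucc) x : V →L[ℝ] V) : V →ₗ[ℝ] V))| = 1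
    rw [LinearMap.det_comp, abs_mul, hA, abs_det_seqL_eq_one t A hA n, one_mul]

theorem stmt6_general {G X : Type*} [MeasurableSpace G]
    (μ : Measure G)
    (t : G → X → X)
    (A : G → X → (EuclideanSpace ℝ (Fin 2) ≃L[ℝ] EuclideanSpace ℝ (Fin 2)))
    (hvol : ∀ g x, |LinearMap.det
      (((A g x : EuclideanSpace ℝ (Fin 2) →L[ℝ] EuclideanSpace ℝ (Fin 2))) :
        EuclideanSpace ℝ (Fin 2) →ₗ[ℝ] EuclideanSpace ℝ (Fin 2))| = 1) :
    (∃ (N : ℕ) (lam : ℝ), 0 < N ∧ 0 < lam ∧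
        ∀ (x : X) (v : EuclideanSpace ℝ (Fin 2)), ‖v‖ = 1 →
          lam ≤ ∫ ω, Real.log ‖(seqL t A N ω x) v‖ ∂(Measure.pi fun _ : Fin N => μ)) ↔
    (∃ (N : ℕ) (lam : ℝ), 0 < N ∧ 0 < lam ∧
        ∀ (x : X) (v : EuclideanSpace ℝ (Fin 2)), ‖v‖ = 1 →
          lam ≤ ∫ ω, Real.log
              ‖ContinuousLinearMap.adjoint
                (((seqL t A N ω x).symm : EuclideanSpace ℝ (Fin 2) →L[ℝ]
                    EuclideanSpace ℝ (Fin 2))) v‖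
            ∂(Measure.pi fun _ : Fin N => μ)) := by
  have : Fact (finrank ℝ (EuclideanSpace ℝ (Fin 2)) = 2) := ⟨finrank_euclideanSpace_fin⟩
  let o : Orientation ℝ (EuclideanSpace ℝ (Fin 2)) (Fin 2) :=
    (EuclideanSpace.basisFun (Fin 2) ℝ).toBasis.orientation
  refine isExpandingOnAverage_congr_of_norm_eq o.rightAngleRotation.symm fun N ω x v => ?_
  rw [o.norm_adjoint_symm_apply, abs_det_seqL_eq_one t A hvol, inv_one, one_mul]

/-- If `E` is a two-dimensional Riemannian vector bundle over a manifold and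
`μ` is a compactly supported measure on bundle automorphisms whose induced action on `Λ²E`
preserves a non-vanishing volume (modelled by the cocycle having `|det| = 1` with respect to a
compatible metric), then `μ` is expanding on average iff it is coexpanding on average, i.e. the
induced inverse–adjoint cocycle on `E*` is expanding on average. -/
theorem stmt6 {G X : Type*} [MeasurableSpace G]
    (μ : Measure G) [IsProbabilityMeasure μ]
    (t : G → X → X)
    (A : G → X → (EuclideanSpace ℝ (Fin 2) ≃L[ℝ] EuclideanSpace ℝ (Fin 2)))
    (hvol : ∀ g x, |LinearMap.det
      (((A g x : EuclideanSpace ℝ (Fin 2) →L[ℝ] EuclideanSpace ℝ (Fin 2))) :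
        EuclideanSpace ℝ (Fin 2) →ₗ[ℝ] EuclideanSpace ℝ (Fin 2))| = 1) :
    (∃ (N : ℕ) (lam : ℝ), 0 < N ∧ 0 < lam ∧
        ∀ (x : X) (v : EuclideanSpace ℝ (Fin 2)), ‖v‖ = 1 →
          lam ≤ ∫ ω, Real.log ‖(seqL t A N ω x) v‖ ∂(Measure.pi fun _ : Fin N => μ)) ↔
    (∃ (N : ℕ) (lam : ℝ), 0 < N ∧ 0 < lam ∧
        ∀ (x : X) (v : EuclideanSpace ℝ (Fin 2)), ‖v‖ = 1 →
          lam ≤ ∫ ω, Real.log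
              ‖ContinuousLinearMap.adjoint
                (((seqL t A N ω x).symm : EuclideanSpace ℝ (Fin 2) →L[ℝ]
                    EuclideanSpace ℝ (Fin 2))) v‖
            ∂(Measure.pi fun _ : Fin N => μ)) :=
  stmt6_general μ t A hvol
end

section
/- If a compactly supported measure μ on diffeomorphisms of a closed manifold M is expanding on average on k-planes for some k, then for every j ∈ ℕ the j-point motion (the diagonal action on M^j, F(x₁,…,x_j) = (f(x₁),…,f(x_j))) is expanding on average on k-planes restricted to each factor; in particular, if μ is expanding on average, then the k-point motion is expanding on average for all k ∈ ℕ. -/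
open MeasureTheory

/-!
For the `k`-planes of a single factor there is nothing to prove: the derivative of the `j`-point
motion on the `i`-th factor is the derivative of the one-point motion at `x i`. For vectors, the
sup metric on the product gives `‖DF v‖ = max_i ‖D f(x_i) v_i‖ ≥ ‖D f(x_{i₀}) v_{i₀}‖` with
`‖v_{i₀}‖ = 1`, so the one-point bound carries over once `log` of the maximum is known to be
integrable; it is, because `log ‖D f v_i‖` differs from its value at `v_i / ‖v_i‖` by a constant.
-/

theorem Real.log_finset_sup' {ι : Type*} {s : Finset ι} (hs : s.Nonempty) {a : ι → ℝ}
    (ha : ∀ i ∈ s, 0 < a i) :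
    Real.log (s.sup' hs a) = s.sup' hs fun i => Real.log (a i) := by
  obtain ⟨m, hm, hsup⟩ := s.exists_mem_eq_sup' hs a
  rw [hsup]
  exact le_antisymm (s.le_sup' (fun i => Real.log (a i)) hm)
    (Finset.sup'_le _ _ fun i hi => Real.log_le_log (ha i hi) (hsup ▸ s.le_sup' a hi))

theorem MeasureTheory.Integrable.finset_sup' {Ω ι : Type*} [MeasurableSpace Ω]
    {ν : Measure Ω} {s : Finset ι} (hs : s.Nonempty) {f : ι → Ω → ℝ}
    (hf : ∀ i ∈ s, Integrable (f i) ν) :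
    Integrable (fun ω => s.sup' hs fun i => f i ω) ν := by
  simp only [← Finset.sup'_apply]
  exact Finset.sup'_induction (p := fun f => Integrable f ν) hs f
    (fun _ h₁ _ h₂ => h₁.sup h₂) hf

section LogNorm

variable {Ω E F : Type*} [MeasurableSpace Ω] {ν : Measure Ω}
  [NormedAddCommGroup E] [NormedSpace ℝ E] [NormedAddCommGroup F] [NormedSpace ℝ F]

theorem integrable_log_norm_apply [IsFiniteMeasure ν] {L : Ω → E ≃L[ℝ] F}
    (hL : ∀ u : E, ‖u‖ = 1 → Integrable (fun ω => Real.log ‖L ω u‖) ν)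
    {v : E} (hv : v ≠ 0) : Integrable (fun ω => Real.log ‖L ω v‖) ν := by
  set u : E := ‖v‖⁻¹ • v
  have hu : ‖u‖ = 1 := norm_smul_inv_norm hv
  have hvu : v = ‖v‖ • u := by simp [u, smul_smul, norm_ne_zero_iff.2 hv]
  have hsplit :
      (fun ω => Real.log ‖L ω v‖) = fun ω => Real.log ‖v‖ + Real.log ‖L ω u‖ := by
    funext ω
    have hLu : L ω u ≠ 0 := (L ω).map_ne_zero_iff.2 fun h0 => by simp [h0] at hu
    rw [hvu, map_smul, norm_smul, norm_norm, ← hvu,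
      Real.log_mul (norm_ne_zero_iff.2 hv) (norm_ne_zero_iff.2 hLu)]
  rw [hsplit]
  exact (integrable_const _).add (hL u hu)

/-- Zero terms can be dropped from the supremum; on the others `log` commutes with `sup'`, which
makes `log` of the supremum integrable. -/
theorem integral_log_le_integral_log_finset_sup' {ι : Type*} {s : Finset ι} (hs : s.Nonempty)
    {g : ι → Ω → ℝ}
    (hg : ∀ i ∈ s, g i = 0 ∨ ((∀ ω, 0 < g i ω) ∧ Integrable (fun ω => Real.log (g i ω)) ν))
    {i₀ : ι} (hi₀ : i₀ ∈ s)
    (hg₀ : (∀ ω, 0 < g i₀ ω) ∧ Integrable (fun ω => Real.log (g i₀ ω)) ν) :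
    ∫ ω, Real.log (g i₀ ω) ∂ν ≤ ∫ ω, Real.log (s.sup' hs fun i => g i ω) ∂ν := by
  classical
  set S := s.filter fun i =>
    (∀ ω, 0 < g i ω) ∧ Integrable (fun ω => Real.log (g i ω)) ν
  have hS : ∀ i ∈ S, (∀ ω, 0 < g i ω) ∧ Integrable (fun ω => Real.log (g i ω)) ν :=
    fun i hi => (Finset.mem_filter.1 hi).2
  have hi₀S : i₀ ∈ S := Finset.mem_filter.2 ⟨hi₀, hg₀⟩
  have hSne : S.Nonempty := ⟨i₀, hi₀S⟩
  have hdrop : ∀ ω, (s.sup' hs fun i => g i ω) = S.sup' hSne fun i => g i ω := by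
    intro ω
    refine le_antisymm (Finset.sup'_le _ _ fun i hi => ?_)
      (Finset.sup'_mono _ (s.filter_subset _) _)
    by_cases hiS : i ∈ S
    · exact S.le_sup' (fun i => g i ω) hiS
    · rw [((hg i hi).resolve_right fun h => hiS (Finset.mem_filter.2 ⟨hi, h⟩))]
      exact (hg₀.1 ω).le.trans (S.le_sup' (fun i => g i ω) hi₀S)
  calc ∫ ω, Real.log (g i₀ ω) ∂ν
      ≤ ∫ ω, (S.sup' hSne fun i => Real.log (g i ω)) ∂ν :=
        integral_mono hg₀.2 (Integrable.finset_sup' _ fun i hi => (hS i hi).2)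
          fun ω => S.le_sup' (fun i => Real.log (g i ω)) hi₀S
    _ = ∫ ω, Real.log (s.sup' hs fun i => g i ω) ∂ν := by
        refine integral_congr_ae (ae_of_all _ fun ω => ?_)
        dsimp only
        rw [hdrop, Real.log_finset_sup' _ fun i hi => (hS i hi).1 ω]

theorem integral_log_norm_le_integral_log_finset_sup' [IsFiniteMeasure ν] {ι : Type*}
    {L : ι → Ω → E ≃L[ℝ] F}
    (hL : ∀ i, ∀ u : E, ‖u‖ = 1 → Integrable (fun ω => Real.log ‖L i ω u‖) ν)
    {s : Finset ι} (hs : s.Nonempty) (v : ι → E) {i₀ : ι} (hi₀ : i₀ ∈ s) (hv₀ : v i₀ ≠ 0) :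
    ∫ ω, Real.log ‖L i₀ ω (v i₀)‖ ∂ν ≤
      ∫ ω, Real.log (s.sup' hs fun i => ‖L i ω (v i)‖) ∂ν := by
  have hnonzero : ∀ i, v i ≠ 0 → (∀ ω, 0 < ‖L i ω (v i)‖) ∧
      Integrable (fun ω => Real.log ‖L i ω (v i)‖) ν := fun i hv =>
    ⟨fun ω => norm_pos_iff.2 ((L i ω).map_ne_zero_iff.2 hv),
      integrable_log_norm_apply (hL i) hv⟩
  refine integral_log_le_integral_log_finset_sup' (g := fun i ω => ‖L i ω (v i)‖) hs
    (fun i _ => ?_) hi₀ (hnonzero i₀ hv₀)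
  by_cases hv : v i = 0
  · exact Or.inl (funext fun ω => by simp [hv])
  · exact Or.inr (hnonzero i hv)

end LogNorm

/-- If a compactly supported measure `μ` on diffeomorphisms of a closed
manifold `M` (modelled by a derivative cocycle `A` over a base action `t`) is expanding on
average on `k`-planes, then for every `j` the `j`-point motion (the diagonal action on `M^j`,
with the sup metric on the product tangent spaces) is expanding on average on `k`-planes
restricted to each factor; in particular if `μ` is expanding on average, then for every `j`
the `j`-point motion is expanding on average. -/
theorem stmt9 {G M : Type*} [MeasurableSpace G] (d k : ℕ)
    (μ : Measure G) [IsProbabilityMeasure μ]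
    (t : G → M → M)
    (A : G → M → (EuclideanSpace ℝ (Fin d) ≃L[ℝ] EuclideanSpace ℝ (Fin d)))
    (hk : ∃ (N : ℕ) (lam : ℝ), 0 < N ∧ 0 < lam ∧
      ∀ (x : M) (W : Submodule ℝ (EuclideanSpace ℝ (Fin d))), Module.finrank ℝ W = k →
        lam ≤ ∫ ω, Real.log (volScale
            ((seqL t A N ω x : EuclideanSpace ℝ (Fin d) →L[ℝ] EuclideanSpace ℝ (Fin d))) W)
          ∂(Measure.pi fun _ : Fin N => μ)) :
    (∀ j : ℕ, ∃ (N : ℕ) (lam : ℝ), 0 < N ∧ 0 < lam ∧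
      ∀ (x : Fin (j + 1) → M) (i : Fin (j + 1))
        (W : Submodule ℝ (EuclideanSpace ℝ (Fin d))), Module.finrank ℝ W = k →
        lam ≤ ∫ ω, Real.log (volScale
            ((seqL t A N ω (x i) :
              EuclideanSpace ℝ (Fin d) →L[ℝ] EuclideanSpace ℝ (Fin d))) W)
          ∂(Measure.pi fun _ : Fin N => μ)) ∧
    ((∃ (N : ℕ) (lam : ℝ), 0 < N ∧ 0 < lam ∧
        ∀ (x : M) (v : EuclideanSpace ℝ (Fin d)), ‖v‖ = 1 →
          lam ≤ ∫ ω, Real.log ‖(seqL t A N ω x) v‖ ∂(Measure.pi fun _ : Fin N => μ)) →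
      ∀ j : ℕ, ∃ (N : ℕ) (lam : ℝ), 0 < N ∧ 0 < lam ∧
        ∀ (x : Fin (j + 1) → M) (v : Fin (j + 1) → EuclideanSpace ℝ (Fin d)),
          (∀ i, ‖v i‖ ≤ 1) → (∃ i, ‖v i‖ = 1) →
          lam ≤ ∫ ω, Real.log
              (Finset.univ.sup' Finset.univ_nonempty
                fun i : Fin (j + 1) => ‖(seqL t A N ω (x i)) (v i)‖)
            ∂(Measure.pi fun _ : Fin N => μ)) := by
  obtain ⟨N, lam, hN, hlam, h⟩ := hk
  refine ⟨fun _ => ⟨N, lam, hN, hlam, fun x i => h (x i)⟩, ?_⟩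
  rintro ⟨N, lam, hN, hlam, h⟩ j
  refine ⟨N, lam, hN, hlam, fun x v _ ⟨i₀, hi₀⟩ => ?_⟩
  -- the Bochner integral of a non-integrable function is `0`, which is `< lam`
  have hunit : ∀ (i : Fin (j + 1)) (u : EuclideanSpace ℝ (Fin d)), ‖u‖ = 1 →
      Integrable (fun ω => Real.log ‖seqL t A N ω (x i) u‖) (Measure.pi fun _ : Fin N => μ) :=
    fun i u hu => Integrable.of_integral_ne_zero (hlam.trans_le (h (x i) u hu)).ne'
  calc lam ≤ ∫ ω, Real.log ‖seqL t A N ω (x i₀) (v i₀)‖ ∂(Measure.pi fun _ : Fin N => μ) :=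
        h (x i₀) (v i₀) hi₀
    _ ≤ _ := integral_log_norm_le_integral_log_finset_sup'
        (L := fun i ω => seqL t A N ω (x i))
        hunit Finset.univ_nonempty v (Finset.mem_univ i₀) (by rintro h0; simp [h0] at hi₀)
end

section
/- Let μ be a probability measure on automorphisms of a complex surface X (real dimension 4) preserving a volume form, acting by holomorphic maps. If μ is expanding on average on tangent vectors (1-planes), then μ is expanding on average on 3-planes. Key computation: for any 3-plane V ⊂ T_x X with orthonormal basis of the form {v, iv, w}, and any volume-preserving holomorphic derivative Df, one has 𝔼[ln‖Df_*(v ∧ iv ∧ w)‖] = 𝔼[ln‖Df v‖]. -/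
open MeasureTheory

/-!
A holomorphic `L` commutes with `J`, so on the `J`-adapted orthonormal basis `v, Jv, w, Jw` its
Gram matrix is that of `a, Ja, c, Jc` with `a = Lv`, `c = Lw`. This Gram determinant is `s²`
with `s = ‖a‖²‖c‖² - ⟪a, c⟫² - ⟪Ja, c⟫² ≥ 0` (Bessel), while the Gram determinant of `a, Ja, c`
is `‖a‖² s`. Volume preservation forces `s = 1`, so `L` scales the volume of the 3-plane
spanned by `v, Jv, w` by exactly `‖Lv‖`. Every 3-plane in a complex surface contains a complex
line, hence has such a basis, and the 3-plane integrand agrees pointwise with the 1-plane one.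
-/

open RealInnerProductSpace Module Matrix Submodule

section InnerProductSpace

variable {E F : Type*} [NormedAddCommGroup E] [InnerProductSpace ℝ E]
  [NormedAddCommGroup F] [InnerProductSpace ℝ F]

theorem Submodule.exists_norm_eq_one_mem {K : Submodule ℝ E} (hK : K ≠ ⊥) :
    ∃ v ∈ K, ‖v‖ = 1 := by
  obtain ⟨x, hxK, hx⟩ := K.exists_mem_ne_zero_of_ne_bot hK
  exact ⟨‖x‖⁻¹ • x, K.smul_mem _ hxK, norm_smul_inv_norm hx⟩

theorem Submodule.inf_ne_bot_of_finrank_lt_add [FiniteDimensional ℝ E] {K₁ K₂ : Submodule ℝ E}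
    (h : finrank ℝ E < finrank ℝ K₁ + finrank ℝ K₂) : K₁ ⊓ K₂ ≠ ⊥ := fun h0 =>
  h.not_ge (finrank_add_finrank_le_of_disjoint (disjoint_iff.mpr h0))

theorem LinearMap.normDet_comp_subtype_span_sq [FiniteDimensional ℝ E] {ι : Type*} [Fintype ι]
    [DecidableEq ι] (L : E →ₗ[ℝ] F) {v : ι → E} (hv : Orthonormal ℝ v) :
    (L ∘ₗ (span ℝ (Set.range v)).subtype).normDet ^ 2 = (gram ℝ (L ∘ v)).det := by
  set b := Basis.span hv.linearIndependent
  have hb : ∀ i, (b i : E) = v i := fun i => congrArg Subtype.val (Basis.span_apply _ i)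
  have hbo : Orthonormal ℝ b := by
    rw [orthonormal_iff_ite] at hv ⊢
    intro i j
    rw [Submodule.coe_inner, hb, hb, hv]
  have h := (L ∘ₗ (span ℝ (Set.range v)).subtype).normDet_sq_eq_det_gram (b.toOrthonormalBasis hbo)
  simp only [RCLike.ofReal_real_eq_id, id_eq] at h
  rw [h]
  congr 2
  ext i
  simp [hb]

theorem LinearMap.det_sq_eq_det_gram [FiniteDimensional ℝ E] {ι : Type*} [Fintype ι]
    [DecidableEq ι] (L : E →ₗ[ℝ] E) {v : ι → E} (hv : Orthonormal ℝ v)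
    (hcard : Fintype.card ι = finrank ℝ E) :
    L.det ^ 2 = (gram ℝ (L ∘ v)).det := by
  have h := L.normDet_sq_eq_det_gram
    (OrthonormalBasis.mk hv (hv.linearIndependent.span_eq_top_of_card_eq_finrank' hcard).ge)
  simp only [RCLike.ofReal_real_eq_id, id_eq, L.normDet_eq_abs_det, sq_abs,
    OrthonormalBasis.coe_mk] at h
  exact h

end InnerProductSpace

section ComplexStructure

variable {E : Type*} [NormedAddCommGroup E] [InnerProductSpace ℝ E]

theorem LinearIsometryEquiv.inner_map_self_eq_zero_of_sq_eq_neg (J : E ≃ₗᵢ[ℝ] E)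
    (hJ : ∀ v, J (J v) = -v) (x : E) : ⟪J x, x⟫ = 0 := by
  have h := J.inner_map_map (J x) x
  rw [hJ, inner_neg_left, real_inner_comm] at h
  linarith

theorem LinearIsometryEquiv.inner_map_right_of_sq_eq_neg (J : E ≃ₗᵢ[ℝ] E)
    (hJ : ∀ v, J (J v) = -v) (x y : E) : ⟪x, J y⟫ = -⟪J x, y⟫ := by
  rw [← J.inner_map_map (J x), hJ, inner_neg_left, neg_neg]

theorem det_gram_four (J : E ≃ₗᵢ[ℝ] E) (hJ : ∀ v, J (J v) = -v) (a c : E) :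
    (gram ℝ ![a, J a, c, J c]).det = (‖a‖ ^ 2 * ‖c‖ ^ 2 - ⟪a, c⟫ ^ 2 - ⟪J a, c⟫ ^ 2) ^ 2 := by
  have hca : ⟪c, a⟫ = ⟪a, c⟫ := real_inner_comm _ _
  have hJca : ⟪J c, a⟫ = -⟪J a, c⟫ := by
    rw [real_inner_comm, J.inner_map_right_of_sq_eq_neg hJ]
  have hmat : gram ℝ ![a, J a, c, J c] = !![‖a‖ ^ 2, 0, ⟪a, c⟫, -⟪J a, c⟫;
      0, ‖a‖ ^ 2, ⟪J a, c⟫, ⟪a, c⟫; ⟪a, c⟫, ⟪J a, c⟫, ‖c‖ ^ 2, 0;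
      -⟪J a, c⟫, ⟪a, c⟫, 0, ‖c‖ ^ 2] := by
    ext i j
    fin_cases i <;> fin_cases j <;>
      simp [gram_apply, hJ, J.inner_map_self_eq_zero_of_sq_eq_neg hJ,
        J.inner_map_right_of_sq_eq_neg hJ, hca, hJca]
  rw [hmat]
  simp [det_succ_row_zero, Fin.sum_univ_succ, Fin.succAbove_of_lt_succ, Fin.succAbove_of_succ_le]
  ring

theorem det_gram_three (J : E ≃ₗᵢ[ℝ] E) (hJ : ∀ v, J (J v) = -v) (a c : E) :
    (gram ℝ ![a, J a, c]).det = ‖a‖ ^ 2 * (‖a‖ ^ 2 * ‖c‖ ^ 2 - ⟪a, c⟫ ^ 2 - ⟪J a, c⟫ ^ 2) := by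
  have hca : ⟪c, a⟫ = ⟪a, c⟫ := real_inner_comm _ _
  have hcJa : ⟪c, J a⟫ = ⟪J a, c⟫ := real_inner_comm _ _
  have haJa : ⟪a, J a⟫ = 0 := by
    rw [real_inner_comm, J.inner_map_self_eq_zero_of_sq_eq_neg hJ]
  rw [det_fin_three]
  simp [gram_apply, J.inner_map_self_eq_zero_of_sq_eq_neg hJ, hca, hcJa, haJa]
  ring

theorem inner_sq_add_inner_map_sq_le (J : E ≃ₗᵢ[ℝ] E) (hJ : ∀ v, J (J v) = -v) (a c : E) :
    ⟪a, c⟫ ^ 2 + ⟪J a, c⟫ ^ 2 ≤ ‖a‖ ^ 2 * ‖c‖ ^ 2 := by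
  -- Cauchy–Schwarz against `‖a‖²` times the orthogonal projection of `c` onto `span {a, J a}`
  have hcs := real_inner_mul_inner_self_le (⟪a, c⟫ • a + ⟪J a, c⟫ • J a) c
  have haJa : ⟪a, J a⟫ = 0 := by
    rw [real_inner_comm, J.inner_map_self_eq_zero_of_sq_eq_neg hJ]
  simp only [inner_add_left, inner_add_right, real_inner_smul_left, real_inner_smul_right,
    J.inner_map_map, J.inner_map_self_eq_zero_of_sq_eq_neg hJ, haJa] at hcs
  simp only [real_inner_self_eq_norm_sq] at hcs
  have key : (⟪a, c⟫ ^ 2 + ⟪J a, c⟫ ^ 2) * (⟪a, c⟫ ^ 2 + ⟪J a, c⟫ ^ 2)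
      ≤ (⟪a, c⟫ ^ 2 + ⟪J a, c⟫ ^ 2) * (‖a‖ ^ 2 * ‖c‖ ^ 2) := by
    convert hcs using 1 <;> ring
  have hP : 0 ≤ ‖a‖ ^ 2 * ‖c‖ ^ 2 := by positivity
  nlinarith

theorem orthonormal_four (J : E ≃ₗᵢ[ℝ] E) (hJ : ∀ v, J (J v) = -v) {v w : E}
    (hv : ‖v‖ = 1) (hw : ‖w‖ = 1) (hvw : ⟪v, w⟫ = 0) (hJvw : ⟪J v, w⟫ = 0) :
    Orthonormal ℝ ![v, J v, w, J w] := by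
  have hwv : ⟪w, v⟫ = 0 := by rw [real_inner_comm, hvw]
  have hwJv : ⟪w, J v⟫ = 0 := by rw [real_inner_comm, hJvw]
  have hvJv : ⟪v, J v⟫ = 0 := by rw [real_inner_comm, J.inner_map_self_eq_zero_of_sq_eq_neg hJ]
  have hwJw : ⟪w, J w⟫ = 0 := by rw [real_inner_comm, J.inner_map_self_eq_zero_of_sq_eq_neg hJ]
  have hJwv : ⟪J w, v⟫ = 0 := by
    rw [real_inner_comm, J.inner_map_right_of_sq_eq_neg hJ, hJvw, neg_zero]
  rw [orthonormal_iff_ite]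
  intro i j
  fin_cases i <;> fin_cases j <;>
    simp [hJ, hv, hw, hvw, hJvw, hwv, hwJv, hvJv, hwJw, hJwv,
      J.inner_map_self_eq_zero_of_sq_eq_neg hJ, J.inner_map_right_of_sq_eq_neg hJ]

theorem orthonormal_three (J : E ≃ₗᵢ[ℝ] E) (hJ : ∀ v, J (J v) = -v) {v w : E}
    (hv : ‖v‖ = 1) (hw : ‖w‖ = 1) (hvw : ⟪v, w⟫ = 0) (hJvw : ⟪J v, w⟫ = 0) :
    Orthonormal ℝ ![v, J v, w] := by
  have h : ![v, J v, w] = ![v, J v, w, J w] ∘ Fin.castSucc := by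
    ext i : 1
    fin_cases i <;> rfl
  rw [h]
  exact (orthonormal_four J hJ hv hw hvw hJvw).comp _ (Fin.castSucc_injective 3)

theorem exists_norm_eq_one_mem_map_mem [FiniteDimensional ℝ E] (J : E ≃ₗᵢ[ℝ] E)
    {W : Submodule ℝ E} (hW : finrank ℝ E < 2 * finrank ℝ W) :
    ∃ v ∈ W, J v ∈ W ∧ ‖v‖ = 1 := by
  set JW := W.map (J.toLinearEquiv : E →ₗ[ℝ] E)
  have hJW : finrank ℝ JW = finrank ℝ W := J.toLinearEquiv.finrank_map_eq W
  obtain ⟨x, hx, hx1⟩ :=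
    exists_norm_eq_one_mem (inf_ne_bot_of_finrank_lt_add (K₁ := W) (K₂ := JW) (by omega))
  obtain ⟨y, hyW, rfl⟩ := (mem_inf.mp hx).2
  exact ⟨y, hyW, (mem_inf.mp hx).1, by simpa using hx1⟩

theorem exists_norm_eq_one_mem_orthogonal_pair [FiniteDimensional ℝ E] {W : Submodule ℝ E}
    (hW : 2 < finrank ℝ W) {u u' : E} (hu : u ∈ W) (hu' : u' ∈ W) :
    ∃ w ∈ W, ‖w‖ = 1 ∧ ⟪u, w⟫ = 0 ∧ ⟪u', w⟫ = 0 := by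
  set S := span ℝ (Set.range ![u, u'])
  have hSW : S ≤ W := span_le.mpr (Set.range_subset_iff.mpr fun i => by fin_cases i <;> assumption)
  have hS : finrank ℝ S ≤ 2 := (finrank_range_le_card _).trans_eq (Fintype.card_fin 2)
  have hne : Sᗮ ⊓ W ≠ ⊥ := by
    intro h
    have := finrank_add_inf_finrank_orthogonal hSW
    rw [h, finrank_bot] at this
    omega
  obtain ⟨w, hw, hw1⟩ := exists_norm_eq_one_mem hne
  have hwS := (mem_orthogonal S w).mp (mem_inf.mp hw).1
  exact ⟨w, (mem_inf.mp hw).2, hw1, hwS u (subset_span ⟨0, rfl⟩),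
    hwS u' (subset_span ⟨1, rfl⟩)⟩

theorem exists_span_eq_of_finrank_eq_three [FiniteDimensional ℝ E] (hE : finrank ℝ E = 4)
    (J : E ≃ₗᵢ[ℝ] E) (hJ : ∀ v, J (J v) = -v) {W : Submodule ℝ E} (hW : finrank ℝ W = 3) :
    ∃ v w : E, ‖v‖ = 1 ∧ ‖w‖ = 1 ∧ ⟪v, w⟫ = 0 ∧ ⟪J v, w⟫ = 0 ∧ span ℝ {v, J v, w} = W := by
  obtain ⟨v, hvW, hJvW, hv⟩ := exists_norm_eq_one_mem_map_mem J (W := W) (by omega)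
  obtain ⟨w, hwW, hw, hvw, hJvw⟩ := exists_norm_eq_one_mem_orthogonal_pair (by omega) hvW hJvW
  refine ⟨v, w, hv, hw, hvw, hJvw, eq_of_le_of_finrank_eq ?_ ?_⟩
  · simp only [span_le, Set.insert_subset_iff, Set.singleton_subset_iff]
    exact ⟨hvW, hJvW, hwW⟩
  · rw [hW, ← Set.singleton_union, ← range_cons_cons_empty, ← range_cons,
      finrank_span_eq_card (orthonormal_three J hJ hv hw hvw hJvw).linearIndependent,
      Fintype.card_fin]

theorem normDet_comp_subtype_span_eq_norm [FiniteDimensional ℝ E] (hE : finrank ℝ E = 4)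
    (J : E ≃ₗᵢ[ℝ] E) (hJ : ∀ v, J (J v) = -v) (L : E →ₗ[ℝ] E) (hL : ∀ u, L (J u) = J (L u))
    (hdet : |L.det| = 1) {v w : E} (hv : ‖v‖ = 1) (hw : ‖w‖ = 1) (hvw : ⟪v, w⟫ = 0)
    (hJvw : ⟪J v, w⟫ = 0) :
    (L ∘ₗ (span ℝ {v, J v, w}).subtype).normDet = ‖L v‖ := by
  set s := ‖L v‖ ^ 2 * ‖L w‖ ^ 2 - ⟪L v, L w⟫ ^ 2 - ⟪J (L v), L w⟫ ^ 2
  have hs_sq : s ^ 2 = 1 := by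
    have h4 := L.det_sq_eq_det_gram (orthonormal_four J hJ hv hw hvw hJvw) (by simp [hE])
    have hL4 : L ∘ ![v, J v, w, J w] = ![L v, J (L v), L w, J (L w)] := by
      ext i : 1
      fin_cases i <;> simp [hL]
    rw [hL4, det_gram_four J hJ, ← sq_abs, hdet, one_pow] at h4
    exact h4.symm
  have hs : s = 1 :=
    (pow_eq_one_iff_of_nonneg (by linarith [inner_sq_add_inner_map_sq_le J hJ (L v) (L w)])
      two_ne_zero).mp hs_sq
  have h3 : (L ∘ₗ (span ℝ {v, J v, w}).subtype).normDet ^ 2 = ‖L v‖ ^ 2 := by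
    have hL3 : L ∘ ![v, J v, w] = ![L v, J (L v), L w] := by
      ext i : 1
      fin_cases i <;> simp [hL]
    rw [← Set.singleton_union, ← range_cons_cons_empty, ← range_cons,
      L.normDet_comp_subtype_span_sq (orthonormal_three J hJ hv hw hvw hJvw), hL3,
      det_gram_three J hJ]
    change ‖L v‖ ^ 2 * s = _
    rw [hs, mul_one]
  exact (pow_left_inj₀ (LinearMap.normDet_nonneg _) (norm_nonneg _) two_ne_zero).mp h3

end ComplexStructure

theorem volScale_eq_normDet {d : ℕ}
    (L : EuclideanSpace ℝ (Fin d) →L[ℝ] EuclideanSpace ℝ (Fin d))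
    (W : Submodule ℝ (EuclideanSpace ℝ (Fin d))) :
    volScale L W = (L.toLinearMap ∘ₗ W.subtype).normDet := by
  have h := (L.comp W.subtypeL).normDet_sq
  simp only [RCLike.ofReal_real_eq_id, id_eq] at h
  rw [volScale, ← ContinuousLinearMap.det, ← h, Real.sqrt_sq (LinearMap.normDet_nonneg _)]
  rfl

local notation "E⁴" => EuclideanSpace ℝ (Fin 4)

theorem volScale_span_eq_norm (J : E⁴ ≃ₗᵢ[ℝ] E⁴) (hJ : ∀ v, J (J v) = -v) (L : E⁴ →L[ℝ] E⁴)
    (hL : ∀ u, L (J u) = J (L u)) (hdet : |LinearMap.det (L : E⁴ →ₗ[ℝ] E⁴)| = 1) {v w : E⁴}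
    (hv : ‖v‖ = 1) (hw : ‖w‖ = 1) (hvw : ⟪v, w⟫ = 0) (hJvw : ⟪J v, w⟫ = 0) :
    volScale L (span ℝ {v, J v, w}) = ‖L v‖ := by
  rw [volScale_eq_normDet]
  exact normDet_comp_subtype_span_eq_norm finrank_euclideanSpace_fin J hJ L hL hdet hv hw hvw hJvw

section Cocycle

variable {G X V : Type*} [TopologicalSpace V] [AddCommGroup V] [Module ℝ V]

theorem seqL_map_comm (t : G → X → X) (A : G → X → (V ≃L[ℝ] V)) (J : V → V)
    (hA : ∀ g x v, A g x (J v) = J (A g x v)) (n : ℕ) (ω : Fin n → G) (x : X) (v : V) :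
    seqL t A n ω x (J v) = J (seqL t A n ω x v) := by
  induction n generalizing x with
  | zero => rfl
  | succ n ih => simp only [seqL, ContinuousLinearEquiv.trans_apply, ih, hA]

theorem abs_det_seqL (t : G → X → X) (A : G → X → (V ≃L[ℝ] V))
    (hA : ∀ g x, |LinearMap.det ((A g x : V →L[ℝ] V) : V →ₗ[ℝ] V)| = 1)
    (n : ℕ) (ω : Fin n → G) (x : X) :
    |LinearMap.det ((seqL t A n ω x : V →L[ℝ] V) : V →ₗ[ℝ] V)| = 1 := by
  induction n generalizing x with
  | zero => simp [seqL]
  | succ n ih =>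
    change |LinearMap.det (((A _ _ : V →L[ℝ] V) : V →ₗ[ℝ] V) ∘ₗ
      ((seqL t A n _ x : V →L[ℝ] V) : V →ₗ[ℝ] V))| = 1
    rw [LinearMap.det_comp, abs_mul, hA, ih, mul_one]

end Cocycle

theorem stmt19_general {G X : Type*} [MeasurableSpace G]
    (μ : Measure G)
    (J : EuclideanSpace ℝ (Fin 4) ≃L[ℝ] EuclideanSpace ℝ (Fin 4))
    (hJ2 : ∀ v, J (J v) = -v) (hJiso : ∀ v, ‖J v‖ = ‖v‖)
    (t : G → X → X)
    (A : G → X → (EuclideanSpace ℝ (Fin 4) ≃L[ℝ] EuclideanSpace ℝ (Fin 4)))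
    (hholo : ∀ g x v, (A g x) (J v) = J ((A g x) v))
    (hvol : ∀ g x, |LinearMap.det
      (((A g x : EuclideanSpace ℝ (Fin 4) →L[ℝ] EuclideanSpace ℝ (Fin 4))) :
        EuclideanSpace ℝ (Fin 4) →ₗ[ℝ] EuclideanSpace ℝ (Fin 4))| = 1) :
    ((∃ (N : ℕ) (lam : ℝ), 0 < N ∧ 0 < lam ∧
        ∀ (x : X) (v : EuclideanSpace ℝ (Fin 4)), ‖v‖ = 1 →
          lam ≤ ∫ ω, Real.log ‖(seqL t A N ω x) v‖ ∂(Measure.pi fun _ : Fin N => μ)) →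
      (∃ (N : ℕ) (lam : ℝ), 0 < N ∧ 0 < lam ∧
        ∀ (x : X) (W : Submodule ℝ (EuclideanSpace ℝ (Fin 4))), Module.finrank ℝ W = 3 →
          lam ≤ ∫ ω, Real.log (volScale
              ((seqL t A N ω x :
                EuclideanSpace ℝ (Fin 4) →L[ℝ] EuclideanSpace ℝ (Fin 4))) W)
            ∂(Measure.pi fun _ : Fin N => μ))) ∧
    (∀ (x : X) (v w : EuclideanSpace ℝ (Fin 4)),
      ‖v‖ = 1 → ‖w‖ = 1 → (inner ℝ v w : ℝ) = 0 → (inner ℝ (J v) w : ℝ) = 0 →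
      ∫ g, Real.log (volScale
          ((A g x : EuclideanSpace ℝ (Fin 4) →L[ℝ] EuclideanSpace ℝ (Fin 4)))
          (Submodule.span ℝ {v, J v, w})) ∂μ
        = ∫ g, Real.log ‖(A g x) v‖ ∂μ) := by
  let J' : E⁴ ≃ₗᵢ[ℝ] E⁴ := { J.toLinearEquiv with norm_map' := hJiso }
  refine ⟨fun ⟨N, lam, hN, hlam, h⟩ => ⟨N, lam, hN, hlam, fun x W hW => ?_⟩,
    fun x v w hv hw hvw hJvw => ?_⟩
  · obtain ⟨v, w, hv, hw, hvw, hJvw, rfl⟩ :=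
      exists_span_eq_of_finrank_eq_three finrank_euclideanSpace_fin J' hJ2 hW
    refine (h x v hv).trans_eq (congrArg _ (funext fun ω => congrArg Real.log ?_))
    exact (volScale_span_eq_norm J' hJ2 _ (seqL_map_comm t A J hholo N ω x)
      (abs_det_seqL t A hvol N ω x) hv hw hvw hJvw).symm
  · refine congrArg _ (funext fun g => congrArg Real.log ?_)
    exact volScale_span_eq_norm J' hJ2 _ (hholo g x) (hvol g x) hv hw hvw hJvw

/-- Let `μ` be a measure on volume-preserving holomorphic automorphisms of a
complex surface `X` (real dimension 4): the real derivative cocycle `A` commutes with the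
orthogonal complex structure `J` (`J² = −1`) and has `|det| = 1`. If `μ` is expanding on
average on tangent vectors (1-planes), then it is expanding on average on 3-planes. Key
computation: for any 3-plane with orthonormal basis `{v, Jv, w}`,
`𝔼[log ‖Df_* (v ∧ Jv ∧ w)‖] = 𝔼[log ‖Df v‖]`. -/
theorem stmt19 {G X : Type*} [MeasurableSpace G]
    (μ : Measure G) [IsProbabilityMeasure μ]
    (J : EuclideanSpace ℝ (Fin 4) ≃L[ℝ] EuclideanSpace ℝ (Fin 4))
    (hJ2 : ∀ v, J (J v) = -v) (hJiso : ∀ v, ‖J v‖ = ‖v‖)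
    (t : G → X → X)
    (A : G → X → (EuclideanSpace ℝ (Fin 4) ≃L[ℝ] EuclideanSpace ℝ (Fin 4)))
    (hholo : ∀ g x v, (A g x) (J v) = J ((A g x) v))
    (hvol : ∀ g x, |LinearMap.det
      (((A g x : EuclideanSpace ℝ (Fin 4) →L[ℝ] EuclideanSpace ℝ (Fin 4))) :
        EuclideanSpace ℝ (Fin 4) →ₗ[ℝ] EuclideanSpace ℝ (Fin 4))| = 1) :
    ((∃ (N : ℕ) (lam : ℝ), 0 < N ∧ 0 < lam ∧
        ∀ (x : X) (v : EuclideanSpace ℝ (Fin 4)), ‖v‖ = 1 →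
          lam ≤ ∫ ω, Real.log ‖(seqL t A N ω x) v‖ ∂(Measure.pi fun _ : Fin N => μ)) →
      (∃ (N : ℕ) (lam : ℝ), 0 < N ∧ 0 < lam ∧
        ∀ (x : X) (W : Submodule ℝ (EuclideanSpace ℝ (Fin 4))), Module.finrank ℝ W = 3 →
          lam ≤ ∫ ω, Real.log (volScale
              ((seqL t A N ω x :
                EuclideanSpace ℝ (Fin 4) →L[ℝ] EuclideanSpace ℝ (Fin 4))) W)
            ∂(Measure.pi fun _ : Fin N => μ))) ∧
    (∀ (x : X) (v w : EuclideanSpace ℝ (Fin 4)),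
      ‖v‖ = 1 → ‖w‖ = 1 → (inner ℝ v w : ℝ) = 0 → (inner ℝ (J v) w : ℝ) = 0 →
      ∫ g, Real.log (volScale
          ((A g x : EuclideanSpace ℝ (Fin 4) →L[ℝ] EuclideanSpace ℝ (Fin 4)))
          (Submodule.span ℝ {v, J v, w})) ∂μ
        = ∫ g, Real.log ‖(A g x) v‖ ∂μ) :=
  stmt19_general μ J hJ2 hJiso t A hholo hvol
end
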